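/- Let (α_k)_{k≥0} be a sequence of nonzero complex numbers with strictly decreasing moduli 1 > |α₀| > |α₁| > ⋯, and let (p_k)_{k≥0} be vectors in a normed space such that for every integer n ≥ 1, Σ_{k=0}^∞ α_k^n v_k = 0, where v_k := p_k applied to (α_k I − R) for a bounded linear operator R, and suppose ‖v_k‖ < 1/|α_k| for all k and the series converges absolutely. Then v_k = 0 for every k; that is, each p_k is a left eigenvector of R with eigenvalue α_k (whenever p_k ≠ 0). -/

import Mathlib

/-!
Argue by strong induction on `k`. Once `v j = 0` for all `j < m`, the relation at exponent `n + 1`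
says `α m ^ (n + 1) • v m = -∑_{k > m} α k ^ (n + 1) • v k`, and the right side has norm at most
`‖α (m + 1)‖ ^ n * C` with `C` independent of `n`. Since `‖α (m + 1)‖ < ‖α m‖`, letting `n → ∞`
forces `α m • v m = 0`, and `α m ≠ 0` because the moduli decrease strictly.
-/

open Filter Topology

theorem nonpos_of_forall_pow_mul_le_pow_mul {a b x C : ℝ} (ha : 0 ≤ a) (hab : a < b)
    (h : ∀ n : ℕ, b ^ n * x ≤ a ^ n * C) : x ≤ 0 := by
  have hb : 0 < b := ha.trans_lt hab
  have hlim : Tendsto (fun n : ℕ => (a / b) ^ n * C) atTop (𝓝 0) := by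
    simpa using (tendsto_pow_atTop_nhds_zero_of_lt_one (div_nonneg ha hb.le)
      ((div_lt_one hb).2 hab)).mul_const C
  refine ge_of_tendsto' hlim fun n => ?_
  rw [div_pow, div_mul_eq_mul_div, le_div_iff₀ (pow_pos hb n), mul_comm]
  exact h n

theorem Summable.tsum_eq_add_tsum_nat_add_of_forall_lt_eq_zero {G : Type*} [AddCommGroup G]
    [TopologicalSpace G] [IsTopologicalAddGroup G] [T2Space G] {f : ℕ → G} (hf : Summable f)
    {m : ℕ} (h : ∀ j < m, f j = 0) : ∑' k, f k = f m + ∑' k, f (k + (m + 1)) := by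
  rw [← hf.sum_add_tsum_nat_add (m + 1), Finset.sum_range_succ,
    Finset.sum_eq_zero fun j hj => h j (Finset.mem_range.1 hj), zero_add]

section

variable {𝕜 E : Type*} [NormedField 𝕜]

theorem tsum_norm_pow_succ_smul_le [SeminormedAddCommGroup E] [NormedSpace 𝕜 E]
    {α : ℕ → 𝕜} {v : ℕ → E} {a : ℝ} (hα : ∀ k, ‖α k‖ ≤ a)
    (hs : Summable fun k => ‖α k • v k‖) (n : ℕ) :
    ∑' k, ‖α k ^ (n + 1) • v k‖ ≤ a ^ n * ∑' k, ‖α k • v k‖ := by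
  have hterm : ∀ k, ‖α k ^ (n + 1) • v k‖ ≤ a ^ n * ‖α k • v k‖ := fun k => by
    rw [pow_succ, mul_smul, norm_smul _ (α k • v k), norm_pow]
    gcongr
    exact hα k
  rw [← tsum_mul_left]
  exact (hs.mul_left _).of_nonneg_of_le (fun _ => norm_nonneg _) hterm
    |>.tsum_le_tsum hterm (hs.mul_left _)

theorem eq_zero_of_tsum_pow_succ_smul_eq_zero_of_forall_lt [NormedAddCommGroup E]
    [NormedSpace 𝕜 E] [CompleteSpace E] {α : ℕ → 𝕜} {v : ℕ → E}
    (hdec : StrictAnti fun k => ‖α k‖)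
    (hsum : ∀ n, Summable fun k => ‖α k ^ (n + 1) • v k‖)
    (hzero : ∀ n, ∑' k, α k ^ (n + 1) • v k = 0) {m : ℕ} (hlow : ∀ j < m, v j = 0) :
    v m = 0 := by
  set C := ∑' k, ‖α (k + (m + 1)) • v (k + (m + 1))‖
  have hbound : ∀ n, ‖α m‖ ^ n * ‖α m • v m‖ ≤ ‖α (m + 1)‖ ^ n * C := fun n => by
    have hsplit := (hsum n).of_norm.tsum_eq_add_tsum_nat_add_of_forall_lt_eq_zero
      (m := m) fun j hj => by rw [hlow j hj, smul_zero]
    rw [hzero n, eq_comm, add_eq_zero_iff_eq_neg] at hsplit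
    calc ‖α m‖ ^ n * ‖α m • v m‖ = ‖α m ^ (n + 1) • v m‖ := by
          rw [pow_succ, mul_smul, norm_smul (α m ^ n), norm_pow]
      _ = ‖∑' k, α (k + (m + 1)) ^ (n + 1) • v (k + (m + 1))‖ := by rw [hsplit, norm_neg]
      _ ≤ ∑' k, ‖α (k + (m + 1)) ^ (n + 1) • v (k + (m + 1))‖ :=
          norm_tsum_le_tsum_norm <|
            (summable_nat_add_iff (f := fun k => ‖α k ^ (n + 1) • v k‖) (m + 1)).2 (hsum n)
      _ ≤ ‖α (m + 1)‖ ^ n * C :=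
          tsum_norm_pow_succ_smul_le (fun k => hdec.antitone (by omega))
            ((summable_nat_add_iff (f := fun k => ‖α k • v k‖) (m + 1)).2
              (by simpa using hsum 0)) n
  have hgap : ‖α (m + 1)‖ < ‖α m‖ := hdec (Nat.lt_succ_self m)
  have hαm : α m ≠ 0 := norm_pos_iff.1 ((norm_nonneg _).trans_lt hgap)
  have hnorm := nonpos_of_forall_pow_mul_le_pow_mul (norm_nonneg _) hgap hbound
  exact (smul_eq_zero.1 (norm_le_zero_iff.1 hnorm)).resolve_left hαm

end

theorem eigenvector_identification_general
    {E : Type*} [NormedAddCommGroup E] [NormedSpace ℂ E] [CompleteSpace E]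
    (α : ℕ → ℂ) (v : ℕ → E)
    (hdec : StrictAnti fun k => ‖α k‖)
    (hsum : ∀ n : ℕ, 1 ≤ n → Summable fun k => ‖α k ^ n • v k‖)
    (hzero : ∀ n : ℕ, 1 ≤ n → ∑' k, α k ^ n • v k = 0) :
    ∀ k, v k = 0 := by
  intro k
  induction k using Nat.strong_induction_on with
  | _ m ih =>
    exact eq_zero_of_tsum_pow_succ_smul_eq_zero_of_forall_lt hdec
      (fun n => hsum (n + 1) (Nat.le_add_left 1 n))
      (fun n => hzero (n + 1) (Nat.le_add_left 1 n)) ih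

/-- If `Σ_k α_k^n v_k = 0` for all `n ≥ 1`, with `1 > |α₀| > |α₁| > ⋯`,
`‖v_k‖ < 1/|α_k|` and absolute convergence, where `v_k = α_k • p_k − R p_k`,
then every `v_k = 0`, i.e. every `p_k` is an eigenvector of `R` with
eigenvalue `α_k`. -/
theorem eigenvector_identification
    {E : Type*} [NormedAddCommGroup E] [NormedSpace ℂ E] [CompleteSpace E]
    (R : E →L[ℂ] E) (α : ℕ → ℂ) (p : ℕ → E) (v : ℕ → E)
    (hv : ∀ k, v k = α k • p k - R (p k))
    (hα0 : ∀ k, α k ≠ 0)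
    (hαlt : ‖α 0‖ < 1)
    (hdec : StrictAnti fun k => ‖α k‖)
    (hbnd : ∀ k, ‖v k‖ < 1 / ‖α k‖)
    (hsum : ∀ n : ℕ, 1 ≤ n → Summable fun k => ‖α k ^ n • v k‖)
    (hzero : ∀ n : ℕ, 1 ≤ n → ∑' k, α k ^ n • v k = 0) :
    ∀ k, v k = 0 :=
  eigenvector_identification_general α v hdec hsum hzero
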